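/- The interleaving distance is a metric (not merely a pseudometric) on the set of isomorphism classes of cellular merge trees: it is real-valued, symmetric, satisfies the triangle inequality, and two cellular merge trees at interleaving distance zero are isomorphic as gauged spaces. -/

import Mathlib

/-!
Points `x, y` of a cellular merge tree have a merge height `m x y`, the least level at which they
lie in one component of the sublevel set; it is computed from lowest common ancestors and is an
ultrametric, so `2 m x y - π x - π y` is a metric, and it induces the given topology because
sublevel sets are compact. A continuous map shifting the gauge by `ε` raises merge heights by at
most `ε`, so the maps of an `ε`-interleaving are `1`-Lipschitz and `β ∘ α` moves points by at most
`2ε`. Given interleavings with `ε → 0`, their limits along an ultrafilter (which exist by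
compactness of sublevel sets) are mutually inverse gauge-preserving maps. Symmetry and the
triangle inequality come from swapping and composing interleavings, and finiteness from mapping
both trees onto their root rays.
-/

open scoped Classical

noncomputable section

/-- Sublevel set of a function. -/
def sub {X : Type*} (f : X → ℝ) (t : ℝ) : Set X := {x | f x ≤ t}
/-- Combinatorial data for a cellular merge tree: a finite rooted tree with a real value at
each node, strictly increasing towards the root; the root carries an infinite upward ray. -/
structure MergeTreeData where
  n : ℕ
  parent : Fin n → Fin n
  root : Fin n
  hroot : parent root = root
  hreach : ∀ v, ∃ k, parent^[k] v = root
  val : Fin n → ℝ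
  hval : ∀ v, v ≠ root → val v < val (parent v)

namespace MergeTreeData

variable (d : MergeTreeData)

/-- Points of the edge attached below each node (for the root: the infinite upward ray). -/
def Carrier : Set (Fin d.n × ℝ) :=
  {p | d.val p.1 ≤ p.2 ∧ (p.1 ≠ d.root → p.2 ≤ d.val (d.parent p.1))}

/-- Glue the top of each edge to the bottom of the parent's edge. -/
def glueRel : ↥d.Carrier → ↥d.Carrier → Prop := fun a b =>
  a.1.2 = b.1.2 ∧ d.parent a.1.1 = b.1.1 ∧ a.1.2 = d.val (d.parent a.1.1)

/-- The geometric realization of the cellular merge tree `d`. -/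
def Space := Quot d.glueRel

instance : TopologicalSpace d.Space := instTopologicalSpaceQuot

/-- The gauge of the canonical cellular merge tree. -/
def gauge : d.Space → ℝ := Quot.lift (fun a => a.1.2) (fun _ _ h => h.1)

/-- `v` is a descendant of `w` (possibly `v = w`). -/
def Desc (v w : Fin d.n) : Prop := ∃ k, d.parent^[k] v = w

def IsLeafNode (v : Fin d.n) : Prop := ∀ w, d.parent w = v → w = v

def IsBranchNode (v : Fin d.n) : Prop := 2 ≤ Nat.card {w : Fin d.n // d.parent w = v ∧ w ≠ v}

/-- Generic: binary (each node has zero or two children) and leaves take distinct values. -/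
def Generic : Prop :=
  (∀ v, Nat.card {w : Fin d.n // d.parent w = v ∧ w ≠ v} = 0 ∨
        Nat.card {w : Fin d.n // d.parent w = v ∧ w ≠ v} = 2) ∧
  ∀ v w, d.IsLeafNode v → d.IsLeafNode w → v ≠ w → d.val v ≠ d.val w

/-- `a` is the least common ancestor of `u` and `w`. -/
def IsLCA (u w a : Fin d.n) : Prop :=
  d.Desc u a ∧ d.Desc w a ∧ ∀ b, d.Desc u b → d.Desc w b → d.Desc a b

/-- The type of leaves. -/
def Leaf := {v : Fin d.n // d.IsLeafNode v}

end MergeTreeData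

/-- Isomorphism of gauged spaces: a homeomorphism commuting with the gauges. -/
def GaugedIso {A B : Type*} [TopologicalSpace A] [TopologicalSpace B]
    (πA : A → ℝ) (πB : B → ℝ) : Prop :=
  ∃ e : A ≃ₜ B, ∀ x, πB (e x) = πA x

/-- A gauged space is a cellular merge tree if it is isomorphic (as a gauged space) to the
realization of some combinatorial merge tree data. -/
def IsCellularMergeTree {A : Type*} [TopologicalSpace A] (π : A → ℝ) : Prop :=
  ∃ d : MergeTreeData, GaugedIso d.gauge π

/-- `σ` is the `ε`-shift map of the merge tree `(A,π)`: it raises the gauge by `ε` and sends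
each point into its connected component in the sublevel set at its target height (which on a
merge tree characterizes the shift uniquely). -/
def ShiftMapProp {A : Type*} [TopologicalSpace A] (π : A → ℝ) (ε : ℝ) (σ : A → A) : Prop :=
  Continuous σ ∧ ∀ x, π (σ x) = π x + ε ∧ σ x ∈ connectedComponentIn (sub π (π x + ε)) x

/-- An `ε`-interleaving between two merge trees. -/
def Interleaved {A B : Type*} [TopologicalSpace A] [TopologicalSpace B]
    (πA : A → ℝ) (πB : B → ℝ) (ε : ℝ) : Prop :=
  ∃ (α : A → B) (β : B → A) (σA : A → A) (σB : B → B),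
    Continuous α ∧ Continuous β ∧
    ShiftMapProp πA (2 * ε) σA ∧ ShiftMapProp πB (2 * ε) σB ∧
    (∀ x, πB (α x) = πA x + ε) ∧ (∀ y, πA (β y) = πB y + ε) ∧
    β ∘ α = σA ∧ α ∘ β = σB

/-- The interleaving distance. -/
def dI {A B : Type*} [TopologicalSpace A] [TopologicalSpace B]
    (πA : A → ℝ) (πB : B → ℝ) : ℝ :=
  sInf {ε : ℝ | 0 ≤ ε ∧ Interleaved πA πB ε}

open Filter Topology

@[simp]
theorem mem_sub {X : Type*} {f : X → ℝ} {t : ℝ} {x : X} : x ∈ sub f t ↔ f x ≤ t := Iff.rfl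

section GaugedSpace

variable {A B C A' B' : Type*} [TopologicalSpace A] [TopologicalSpace B] [TopologicalSpace C]
  [TopologicalSpace A'] [TopologicalSpace B'] {πA : A → ℝ} {πB : B → ℝ} {πC : C → ℝ}
  {πA' : A' → ℝ} {πB' : B' → ℝ}

theorem GaugedIso.symm (h : GaugedIso πA πB) : GaugedIso πB πA :=
  let ⟨e, he⟩ := h
  ⟨e.symm, fun y => by rw [← he (e.symm y), e.apply_symm_apply]⟩

theorem GaugedIso.trans (h₁ : GaugedIso πA πB) (h₂ : GaugedIso πB πC) : GaugedIso πA πC :=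
  let ⟨e₁, he₁⟩ := h₁
  let ⟨e₂, he₂⟩ := h₂
  ⟨e₁.trans e₂, fun x => (he₂ (e₁ x)).trans (he₁ x)⟩

theorem image_sub_of_gauge_eq (e : A ≃ₜ A') (he : ∀ x, πA' (e x) = πA x) (t : ℝ) :
    e '' sub πA t = sub πA' t := by
  ext y
  rw [e.image_eq_preimage_symm]
  change πA (e.symm y) ≤ t ↔ πA' y ≤ t
  rw [← he, e.apply_symm_apply]

theorem ShiftMapProp.conj {ε : ℝ} {σ : A → A} (hσ : ShiftMapProp πA ε σ) (e : A ≃ₜ A')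
    (he : ∀ x, πA' (e x) = πA x) : ShiftMapProp πA' ε (e ∘ σ ∘ e.symm) := by
  refine ⟨e.continuous.comp (hσ.1.comp e.symm.continuous), fun y => ?_⟩
  obtain ⟨x, rfl⟩ := e.surjective y
  obtain ⟨hπ, hmem⟩ := hσ.2 x
  simp only [Function.comp_apply, e.symm_apply_apply, he, hπ, true_and]
  rw [← image_sub_of_gauge_eq e he, ← e.image_connectedComponentIn
    (connectedComponentIn_nonempty_iff.1 ⟨_, hmem⟩)]
  exact Set.mem_image_of_mem e hmem

theorem Interleaved.symm {ε : ℝ} (h : Interleaved πA πB ε) : Interleaved πB πA ε :=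
  let ⟨α, β, σA, σB, hα, hβ, hσA, hσB, hαπ, hβπ, hβα, hαβ⟩ := h
  ⟨β, α, σB, σA, hβ, hα, hσB, hσA, hβπ, hαπ, hαβ, hβα⟩

theorem Interleaved.congr {ε : ℝ} (h : Interleaved πA πB ε) (hA : GaugedIso πA πA')
    (hB : GaugedIso πB πB') : Interleaved πA' πB' ε := by
  obtain ⟨eA, heA⟩ := hA
  obtain ⟨eB, heB⟩ := hB
  obtain ⟨α, β, σA, σB, hα, hβ, hσA, hσB, hαπ, hβπ, hβα, hαβ⟩ := h
  refine ⟨eB ∘ α ∘ eA.symm, eA ∘ β ∘ eB.symm, _, _,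
    eB.continuous.comp (hα.comp eA.symm.continuous),
    eA.continuous.comp (hβ.comp eB.symm.continuous), hσA.conj eA heA, hσB.conj eB heB,
    fun x => ?_, fun y => ?_, ?_, ?_⟩
  · simp only [Function.comp_apply, heB, hαπ, ← heA (eA.symm x), eA.apply_symm_apply]
  · simp only [Function.comp_apply, heA, hβπ, ← heB (eB.symm y), eB.apply_symm_apply]
  · simp only [← hβα, Function.comp_def, eB.symm_apply_apply]
  · simp only [← hαβ, Function.comp_def, eA.symm_apply_apply]

/-- The component of `σY (α x)` at level `πY (α x) + 2b` is mapped by `β` into the component of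
`β (α x)` at level `πX x + 2(a + b)`, which is that of `x`. -/
theorem ShiftMapProp.comp_conj {X Y : Type*} [TopologicalSpace X] [TopologicalSpace Y]
    {πX : X → ℝ} {πY : Y → ℝ} {a b : ℝ} {α : X → Y} {β : Y → X} {σY : Y → Y} (hb : 0 ≤ b)
    (hβ : Continuous β) (hα : Continuous α) (hαπ : ∀ x, πY (α x) = πX x + a)
    (hβπ : ∀ y, πX (β y) = πY y + a) (hβα : ShiftMapProp πX (2 * a) (β ∘ α))
    (hσY : ShiftMapProp πY (2 * b) σY) : ShiftMapProp πX (2 * (a + b)) (β ∘ σY ∘ α) := by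
  refine ⟨hβ.comp (hσY.1.comp hα), fun x => ?_⟩
  obtain ⟨hπY, hmemY⟩ := hσY.2 (α x)
  have hπ : πX (β (σY (α x))) = πX x + 2 * (a + b) := by
    rw [hβπ, hπY, hαπ]
    ring
  refine ⟨hπ, ?_⟩
  have hsub : β '' connectedComponentIn (sub πY (πY (α x) + 2 * b)) (α x) ⊆
      sub πX (πX x + 2 * (a + b)) := by
    rintro _ ⟨z, hz, rfl⟩
    have hz := mem_sub.1 (connectedComponentIn_subset _ _ hz)
    rw [mem_sub, hβπ]
    rw [hαπ] at hz
    linarith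
  have hαx : α x ∈ sub πY (πY (α x) + 2 * b) := mem_sub.2 (by linarith)
  have hmono : sub πX (πX x + 2 * a) ⊆ sub πX (πX x + 2 * (a + b)) := fun z hz => by
    rw [mem_sub] at hz ⊢
    linarith
  have hσX : β (α x) ∈ connectedComponentIn (sub πX (πX x + 2 * (a + b))) x :=
    connectedComponentIn_mono x hmono (hβα.2 x).2
  rw [connectedComponentIn_eq hσX]
  exact (isPreconnected_connectedComponentIn.image β hβ.continuousOn).subset_connectedComponentIn
    ⟨α x, mem_connectedComponentIn hαx, rfl⟩ hsub ⟨σY (α x), hmemY, rfl⟩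

theorem Interleaved.trans {ε δ : ℝ} (hε : 0 ≤ ε) (hδ : 0 ≤ δ) (h₁ : Interleaved πA πB ε)
    (h₂ : Interleaved πB πC δ) : Interleaved πA πC (ε + δ) := by
  obtain ⟨α₁, β₁, σA, σB, hα₁, hβ₁, hσA, hσB, hα₁π, hβ₁π, hβα₁, hαβ₁⟩ := h₁
  obtain ⟨α₂, β₂, σB', σC, hα₂, hβ₂, hσB', hσC, hα₂π, hβ₂π, hβα₂, hαβ₂⟩ := h₂
  subst hβα₁ hαβ₁ hβα₂ hαβ₂
  refine ⟨α₂ ∘ α₁, β₁ ∘ β₂, _, _, hα₂.comp hα₁, hβ₁.comp hβ₂,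
    ShiftMapProp.comp_conj hδ hβ₁ hα₁ hα₁π hβ₁π hσA hσB', ?_, fun x => ?_, fun y => ?_, rfl, rfl⟩
  · rw [add_comm ε δ]
    exact ShiftMapProp.comp_conj hε hα₂ hβ₂ hβ₂π hα₂π hσC hσB
  · simp only [Function.comp_apply, hα₂π, hα₁π]
    ring
  · simp only [Function.comp_apply, hβ₁π, hβ₂π]
    ring

theorem bddBelow_setOf_interleaved (πA : A → ℝ) (πB : B → ℝ) :
    BddBelow {ε : ℝ | 0 ≤ ε ∧ Interleaved πA πB ε} :=
  ⟨0, fun _ h => h.1⟩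

theorem dI_comm (πA : A → ℝ) (πB : B → ℝ) : dI πA πB = dI πB πA := by
  simp only [dI]
  congr 1
  ext ε
  exact and_congr_right fun _ => ⟨Interleaved.symm, Interleaved.symm⟩

theorem dI_le_add (hAB : {ε : ℝ | 0 ≤ ε ∧ Interleaved πA πB ε}.Nonempty)
    (hBC : {ε : ℝ | 0 ≤ ε ∧ Interleaved πB πC ε}.Nonempty) :
    dI πA πC ≤ dI πA πB + dI πB πC := by
  rw [dI, dI, dI, ← csInf_add hAB (bddBelow_setOf_interleaved πA πB) hBC
    (bddBelow_setOf_interleaved πB πC)]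
  refine csInf_le_csInf (bddBelow_setOf_interleaved πA πC) (hAB.add hBC) ?_
  rintro _ ⟨ε, ⟨hε, h₁⟩, δ, ⟨hδ, h₂⟩, rfl⟩
  exact ⟨add_nonneg hε hδ, h₁.trans hε hδ h₂⟩

theorem exists_seq_interleaved_of_dI_eq_zero
    (hne : {ε : ℝ | 0 ≤ ε ∧ Interleaved πA πB ε}.Nonempty) (h : dI πA πB = 0) :
    ∃ ε : ℕ → ℝ, Tendsto ε atTop (𝓝 0) ∧ ∀ n, Interleaved πA πB (ε n) := by
  obtain ⟨ε, -, hlim, hmem⟩ := exists_seq_tendsto_sInf hne (bddBelow_setOf_interleaved πA πB)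
  exact ⟨ε, h ▸ hlim, fun n => (hmem n).2⟩

end GaugedSpace

section UltrafilterLimit

variable {X Y : Type*} {U : Ultrafilter ℕ} {ε : ℕ → ℝ}

theorem exists_tendsto_of_gauge_eq_add [TopologicalSpace Y] {πX : X → ℝ} {πY : Y → ℝ}
    (hY : ∀ t, IsCompact (sub πY t)) (hε : Tendsto ε U (𝓝 0)) {f : ℕ → X → Y}
    (hf : ∀ n x, πY (f n x) = πX x + ε n) (x : X) : ∃ y, Tendsto (f · x) U (𝓝 y) := by
  have hmem : sub πY (πX x + 1) ∈ U.map (f · x) := by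
    refine Filter.mem_map.2 (Filter.mem_of_superset (hε.eventually (gt_mem_nhds one_pos)) ?_)
    intro n hn
    rw [Set.mem_preimage, mem_sub, hf]
    exact add_le_add_right (le_of_lt hn) _
  obtain ⟨y, -, hy⟩ := (hY _).ultrafilter_le_nhds' _ hmem
  exact ⟨y, hy⟩

variable [PseudoMetricSpace X] [PseudoMetricSpace Y]

theorem LipschitzWith.of_tendsto {f : ℕ → X → Y} {F : X → Y} (hf : ∀ n, LipschitzWith 1 (f n))
    (hF : ∀ x, Tendsto (f · x) U (𝓝 (F x))) : LipschitzWith 1 F :=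
  LipschitzWith.of_dist_le_mul fun x y =>
    le_of_tendsto_of_tendsto' ((hF x).dist (hF y)) tendsto_const_nhds fun n =>
      (hf n).dist_le_mul x y

theorem leftInverse_of_tendsto [T2Space X] {α : ℕ → X → Y} {β : ℕ → Y → X} {F : X → Y}
    {G : Y → X} {δ : ℕ → ℝ} (hF : ∀ x, Tendsto (α · x) U (𝓝 (F x)))
    (hG : ∀ y, Tendsto (β · y) U (𝓝 (G y))) (hβ : ∀ n, LipschitzWith 1 (β n))
    (hβα : ∀ n x, dist (β n (α n x)) x ≤ δ n) (hδ : Tendsto δ U (𝓝 0)) :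
    Function.LeftInverse G F := fun x => by
  refine tendsto_nhds_unique (hG (F x)) (tendsto_iff_dist_tendsto_zero.2 ?_)
  have hbound : ∀ n, dist (β n (F x)) x ≤ dist (F x) (α n x) + δ n := fun n =>
    calc dist (β n (F x)) x ≤ dist (β n (F x)) (β n (α n x)) + dist (β n (α n x)) x :=
          dist_triangle _ _ _
      _ ≤ dist (F x) (α n x) + δ n := by
          gcongr
          · simpa using (hβ n).dist_le_mul (F x) (α n x)
          · exact hβα n x
  refine squeeze_zero (fun _ => dist_nonneg) hbound ?_
  simpa using ((tendsto_const_nhds (x := F x)).dist (hF x)).add hδ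

end UltrafilterLimit

/-- The limits of `α n` and `β n` along an ultrafilter exist by compactness of sublevel sets and
are mutually inverse `1`-Lipschitz maps. -/
theorem gaugedIso_of_tendsto {X Y : Type*} [MetricSpace X] [MetricSpace Y] {πX : X → ℝ}
    {πY : Y → ℝ} (hπY : Continuous πY) (hX : ∀ t, IsCompact (sub πX t))
    (hY : ∀ t, IsCompact (sub πY t)) {ε : ℕ → ℝ} (hε : Tendsto ε atTop (𝓝 0))
    {α : ℕ → X → Y} {β : ℕ → Y → X} (hα : ∀ n, LipschitzWith 1 (α n))
    (hβ : ∀ n, LipschitzWith 1 (β n)) (hαπ : ∀ n x, πY (α n x) = πX x + ε n)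
    (hβπ : ∀ n y, πX (β n y) = πY y + ε n) (hβα : ∀ n x, dist (β n (α n x)) x ≤ 2 * ε n)
    (hαβ : ∀ n y, dist (α n (β n y)) y ≤ 2 * ε n) : GaugedIso πX πY := by
  obtain ⟨U, hU⟩ := exists_ultrafilter_le (atTop : Filter ℕ)
  have hεU : Tendsto ε U (𝓝 0) := hε.mono_left hU
  have h2εU : Tendsto (2 * ε ·) U (𝓝 0) := by simpa using hεU.const_mul 2
  choose F hF using exists_tendsto_of_gauge_eq_add hY hεU hαπ
  choose G hG using exists_tendsto_of_gauge_eq_add hX hεU hβπ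
  refine ⟨{ toFun := F, invFun := G
            left_inv := leftInverse_of_tendsto hF hG hβ hβα h2εU
            right_inv := leftInverse_of_tendsto hG hF hα hαβ h2εU
            continuous_toFun := (LipschitzWith.of_tendsto hα hF).continuous
            continuous_invFun := (LipschitzWith.of_tendsto hβ hG).continuous }, fun x => ?_⟩
  refine tendsto_nhds_unique ((hπY.tendsto _).comp (hF x)) ?_
  simpa [Function.comp_def, hαπ] using tendsto_const_nhds.add hεU

namespace MergeTreeData

variable {d : MergeTreeData}

theorem desc_refl (v : Fin d.n) : d.Desc v v := ⟨0, rfl⟩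

theorem desc_parent (v : Fin d.n) : d.Desc v (d.parent v) := ⟨1, rfl⟩

theorem desc_root (v : Fin d.n) : d.Desc v d.root := d.hreach v

theorem Desc.trans {u v w : Fin d.n} (huv : d.Desc u v) (hvw : d.Desc v w) : d.Desc u w := by
  obtain ⟨k, rfl⟩ := huv
  obtain ⟨l, rfl⟩ := hvw
  exact ⟨l + k, Function.iterate_add_apply _ l k u⟩

theorem Desc.eq_root {w : Fin d.n} (h : d.Desc d.root w) : w = d.root := by
  obtain ⟨k, rfl⟩ := h
  exact Function.iterate_fixed d.hroot k

theorem Desc.parent_of_ne {v w : Fin d.n} (h : d.Desc v w) (hne : v ≠ w) :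
    d.Desc (d.parent v) w := by
  obtain ⟨_ | k, rfl⟩ := h
  · exact absurd rfl hne
  · exact ⟨k, (Function.iterate_succ_apply _ k v).symm⟩

theorem Desc.ne_root {v w : Fin d.n} (h : d.Desc v w) (hne : v ≠ w) : v ≠ d.root := by
  rintro rfl
  exact hne h.eq_root.symm

theorem val_le_val_parent (v : Fin d.n) : d.val v ≤ d.val (d.parent v) := by
  by_cases hv : v = d.root
  · rw [hv, d.hroot]
  · exact (d.hval v hv).le

theorem Desc.val_le {v w : Fin d.n} (h : d.Desc v w) : d.val v ≤ d.val w := by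
  obtain ⟨k, rfl⟩ := h
  induction k generalizing v with
  | zero => exact le_rfl
  | succ k ih => exact (val_le_val_parent v).trans ih

theorem Desc.val_lt {v w : Fin d.n} (h : d.Desc v w) (hne : v ≠ w) : d.val v < d.val w :=
  (d.hval v (h.ne_root hne)).trans_le (h.parent_of_ne hne).val_le

theorem Desc.antisymm {v w : Fin d.n} (hvw : d.Desc v w) (hwv : d.Desc w v) : v = w := by
  by_contra hne
  exact (hvw.val_lt hne).not_ge hwv.val_le

theorem Desc.total {v a b : Fin d.n} (ha : d.Desc v a) (hb : d.Desc v b) :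
    d.Desc a b ∨ d.Desc b a := by
  obtain ⟨k, rfl⟩ := ha
  obtain ⟨l, rfl⟩ := hb
  rcases le_total k l with h | h
  · exact .inl ⟨l - k, by rw [← Function.iterate_add_apply, Nat.sub_add_cancel h]⟩
  · exact .inr ⟨k - l, by rw [← Function.iterate_add_apply, Nat.sub_add_cancel h]⟩

theorem exists_isLCA (v w : Fin d.n) : ∃ a, d.IsLCA v w a := by
  obtain ⟨a, ha, hmin⟩ := Finset.exists_min_image
    (Finset.univ.filter fun a => d.Desc v a ∧ d.Desc w a) d.val
    ⟨d.root, by simp [desc_root]⟩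
  simp only [Finset.mem_filter, Finset.mem_univ, true_and] at ha hmin
  refine ⟨a, ha.1, ha.2, fun b hvb hwb => ?_⟩
  rcases ha.1.total hvb with hab | hba
  · exact hab
  · rcases eq_or_ne b a with rfl | hne
    · exact desc_refl b
    · exact absurd (hmin b ⟨hvb, hwb⟩) (hba.val_lt hne).not_ge

def lca (d : MergeTreeData) (v w : Fin d.n) : Fin d.n := (exists_isLCA v w).choose

theorem isLCA_lca (v w : Fin d.n) : d.IsLCA v w (d.lca v w) := (exists_isLCA v w).choose_spec

theorem desc_lca_left (v w : Fin d.n) : d.Desc v (d.lca v w) := (isLCA_lca v w).1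

theorem desc_lca_right (v w : Fin d.n) : d.Desc w (d.lca v w) := (isLCA_lca v w).2.1

theorem lca_desc {v w b : Fin d.n} (hv : d.Desc v b) (hw : d.Desc w b) : d.Desc (d.lca v w) b :=
  (isLCA_lca v w).2.2 b hv hw

theorem IsLCA.lca_eq {v w a : Fin d.n} (h : d.IsLCA v w a) : d.lca v w = a :=
  (lca_desc h.1 h.2.1).antisymm (h.2.2 _ (desc_lca_left v w) (desc_lca_right v w))

theorem lca_comm (v w : Fin d.n) : d.lca v w = d.lca w v :=
  IsLCA.lca_eq ⟨desc_lca_right w v, desc_lca_left w v, fun _ hv hw => lca_desc hw hv⟩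

theorem lca_eq_right {v w : Fin d.n} (h : d.Desc v w) : d.lca v w = w :=
  IsLCA.lca_eq ⟨h, desc_refl w, fun _ _ hw => hw⟩

theorem lca_eq_left {v w : Fin d.n} (h : d.Desc w v) : d.lca v w = v := by
  rw [lca_comm, lca_eq_right h]

theorem lca_parent_left {v w : Fin d.n} (h : ¬d.Desc w v) : d.lca (d.parent v) w = d.lca v w := by
  have hne : v ≠ d.lca v w := fun he => h (he ▸ desc_lca_right v w)
  refine IsLCA.lca_eq ⟨(desc_lca_left v w).parent_of_ne hne, desc_lca_right v w, fun b hb hwb => ?_⟩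
  exact lca_desc ((desc_parent v).trans hb) hwb

theorem mk_eq_mk_of_desc {u w : Fin d.n} {h : ℝ} (hu : (u, h) ∈ d.Carrier)
    (hw : (w, h) ∈ d.Carrier) (huw : d.Desc u w) :
    Quot.mk d.glueRel ⟨(u, h), hu⟩ = Quot.mk d.glueRel ⟨(w, h), hw⟩ := by
  rcases eq_or_ne u w with rfl | hne
  · rfl
  have hpw := huw.parent_of_ne hne
  have htop : h ≤ d.val (d.parent u) := hu.2 (huw.ne_root hne)
  have hval : d.val (d.parent u) = d.val w := le_antisymm hpw.val_le (hw.1.trans htop)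
  obtain rfl : d.parent u = w := by
    by_contra hne'
    exact (hpw.val_lt hne').ne hval
  exact Quot.sound ⟨rfl, rfl, le_antisymm htop hw.1⟩

theorem exists_desc_mem_carrier {v : Fin d.n} {h : ℝ} (hv : d.val v ≤ h) :
    ∃ u, d.Desc v u ∧ (u, h) ∈ d.Carrier := by
  obtain ⟨u, hu, hmax⟩ := Finset.exists_max_image
    (Finset.univ.filter fun u => d.Desc v u ∧ d.val u ≤ h) d.val ⟨v, by simp [desc_refl, hv]⟩
  simp only [Finset.mem_filter, Finset.mem_univ, true_and] at hu hmax
  refine ⟨u, hu.1, hu.2, fun hur => ?_⟩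
  by_contra! hlt
  exact (d.hval u hur).not_ge (hmax _ ⟨hu.1.trans (desc_parent u), hlt.le⟩)

def pointAbove (v : Fin d.n) (h : ℝ) (hv : d.val v ≤ h) : d.Space :=
  Quot.mk d.glueRel ⟨(_, h), (exists_desc_mem_carrier hv).choose_spec.2⟩

@[simp]
theorem gauge_pointAbove (v : Fin d.n) (h : ℝ) (hv : d.val v ≤ h) :
    d.gauge (pointAbove v h hv) = h := rfl

theorem pointAbove_eq {v u : Fin d.n} {h : ℝ} (hv : d.val v ≤ h) (hvu : d.Desc v u)
    (hu : (u, h) ∈ d.Carrier) : pointAbove v h hv = Quot.mk d.glueRel ⟨(u, h), hu⟩ := by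
  obtain ⟨hvu', hu'⟩ := (exists_desc_mem_carrier hv).choose_spec
  rcases hvu'.total hvu with h₁ | h₁
  · exact mk_eq_mk_of_desc hu' hu h₁
  · exact (mk_eq_mk_of_desc hu hu' h₁).symm

theorem pointAbove_self (a : d.Carrier) : pointAbove a.1.1 a.1.2 a.2.1 = Quot.mk d.glueRel a :=
  pointAbove_eq _ (desc_refl _) a.2

theorem pointAbove_eq_of_desc {v w : Fin d.n} {h : ℝ} (hvw : d.Desc v w) (hv : d.val v ≤ h)
    (hw : d.val w ≤ h) : pointAbove v h hv = pointAbove w h hw := by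
  obtain ⟨hwu, hu⟩ := (exists_desc_mem_carrier hw).choose_spec
  exact pointAbove_eq hv (hvw.trans hwu) hu

theorem pointAbove_eq_of_val_lca_le {v w : Fin d.n} {h : ℝ} (hv : d.val v ≤ h)
    (hw : d.val w ≤ h) (hlca : d.val (d.lca v w) ≤ h) : pointAbove v h hv = pointAbove w h hw :=
  (pointAbove_eq_of_desc (desc_lca_left v w) hv hlca).trans
    (pointAbove_eq_of_desc (desc_lca_right v w) hw hlca).symm

/-- For points on comparable edges the `lca` term is dominated by the heights. -/
def mergeHeightRep (a b : d.Carrier) : ℝ := max (max a.1.2 b.1.2) (d.val (d.lca a.1.1 b.1.1))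

theorem mergeHeightRep_comm (a b : d.Carrier) : mergeHeightRep a b = mergeHeightRep b a := by
  rw [mergeHeightRep, mergeHeightRep, max_comm a.1.2, lca_comm]

theorem mergeHeightRep_of_glueRel {a a' : d.Carrier} (h : d.glueRel a a') (b : d.Carrier) :
    mergeHeightRep a b = mergeHeightRep a' b := by
  obtain ⟨⟨u, s⟩, ha⟩ := a
  obtain ⟨⟨u', s'⟩, ha'⟩ := a'
  obtain ⟨⟨w, r⟩, hb⟩ := b
  obtain ⟨rfl : s = s', rfl : d.parent u = u', hs : s = d.val (d.parent u)⟩ := h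
  simp only [mergeHeightRep]
  by_cases hwu : d.Desc w u
  · rw [lca_eq_left hwu, lca_eq_left (hwu.trans (desc_parent u)), ← hs,
      max_eq_left (ha.1.trans (le_max_left s r)), max_eq_left (le_max_left s r)]
  · rw [lca_parent_left hwu]

variable (d) in
/-- The lowest height at which the two points lie in a common component of the sublevel set
(`mem_connectedComponentIn_sub_iff`). -/
def mergeHeight : d.Space → d.Space → ℝ :=
  Quot.lift₂ mergeHeightRep
    (fun a _ _ h => by rw [mergeHeightRep_comm a, mergeHeightRep_of_glueRel h, mergeHeightRep_comm])
    (fun _ _ b h => mergeHeightRep_of_glueRel h b)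

theorem mergeHeight_mk (a b : d.Carrier) :
    d.mergeHeight (Quot.mk _ a) (Quot.mk _ b) = mergeHeightRep a b := rfl

theorem mergeHeight_comm (x y : d.Space) : d.mergeHeight x y = d.mergeHeight y x := by
  induction x using Quot.ind
  induction y using Quot.ind
  exact mergeHeightRep_comm _ _

theorem gauge_le_mergeHeight (x y : d.Space) : d.gauge x ≤ d.mergeHeight x y := by
  induction x using Quot.ind
  induction y using Quot.ind
  exact (le_max_left _ _).trans (le_max_left _ _)

theorem mergeHeight_self (x : d.Space) : d.mergeHeight x x = d.gauge x := by
  induction x using Quot.ind with | _ a =>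
  rw [mergeHeight_mk, mergeHeightRep, lca_eq_right (desc_refl _), max_self,
    max_eq_left a.2.1, gauge]

/-- The two lowest common ancestors through `y` are comparable, and the higher one is a common
ancestor of `x` and `z`. -/
theorem mergeHeight_le_max (x y z : d.Space) :
    d.mergeHeight x z ≤ max (d.mergeHeight x y) (d.mergeHeight y z) := by
  induction x using Quot.ind with | _ a =>
  induction y using Quot.ind with | _ b =>
  induction z using Quot.ind with | _ c =>
  simp only [mergeHeight_mk, mergeHeightRep, max_le_iff]
  refine ⟨⟨by simp, by simp⟩, ?_⟩
  rcases (desc_lca_right a.1.1 b.1.1).total (desc_lca_left b.1.1 c.1.1) with h | h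
  · exact (lca_desc ((desc_lca_left _ _).trans h) (desc_lca_right _ _)).val_le.trans (by simp)
  · exact (lca_desc (desc_lca_left _ _) ((desc_lca_right _ _).trans h)).val_le.trans (by simp)

theorem eq_of_mergeHeight_le {x y : d.Space} (hxy : d.gauge x = d.gauge y)
    (hm : d.mergeHeight x y ≤ d.gauge x) : x = y := by
  induction x using Quot.ind with | _ a =>
  induction y using Quot.ind with | _ b =>
  obtain ⟨⟨v, s⟩, ha⟩ := a
  obtain ⟨⟨w, r⟩, hb⟩ := b
  obtain rfl : s = r := hxy
  rw [← pointAbove_self, ← pointAbove_self]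
  exact pointAbove_eq_of_val_lca_le ha.1 hb.1 ((le_max_right _ _).trans hm)

theorem mergeHeight_pointAbove {v : Fin d.n} {h h' : ℝ} (hv : d.val v ≤ h) (hv' : d.val v ≤ h') :
    d.mergeHeight (pointAbove v h hv) (pointAbove v h' hv') = max h h' := by
  obtain ⟨hvu, hu⟩ := (exists_desc_mem_carrier hv).choose_spec
  obtain ⟨hvu', hu'⟩ := (exists_desc_mem_carrier hv').choose_spec
  refine max_eq_left ?_
  rcases hvu.total hvu' with h₁ | h₁
  · rw [lca_eq_right h₁]
    exact hu'.1.trans (le_max_right _ _)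
  · rw [lca_eq_left h₁]
    exact hu.1.trans (le_max_left _ _)

theorem continuous_gauge : Continuous d.gauge :=
  continuous_quot_lift _ (continuous_snd.comp continuous_subtype_val)

theorem continuous_mergeHeight_left (y : d.Space) : Continuous (d.mergeHeight · y) := by
  induction y using Quot.ind with | _ b =>
  have : Continuous fun p : Fin d.n × ℝ => max (max p.2 b.1.2) (d.val (d.lca p.1 b.1.1)) :=
    (continuous_snd.max continuous_const).max
      ((continuous_of_discreteTopology (f := fun v => d.val (d.lca v b.1.1))).comp continuous_fst)
  exact isQuotientMap_quot_mk.continuous_iff.2 (this.comp continuous_subtype_val)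

theorem isClosed_carrier : IsClosed d.Carrier := by
  have hval : Continuous fun p : Fin d.n × ℝ => d.val p.1 :=
    continuous_of_discreteTopology.comp continuous_fst
  have hpar : Continuous fun p : Fin d.n × ℝ => d.val (d.parent p.1) :=
    (continuous_of_discreteTopology (f := fun v => d.val (d.parent v))).comp continuous_fst
  simp only [Carrier, imp_iff_not_or, Set.ofPred_and, Set.ofPred_or]
  exact (isClosed_le hval continuous_snd).inter
    (((isClosed_discrete {v : Fin d.n | ¬v ≠ d.root}).preimage continuous_fst).union
      (isClosed_le continuous_snd hpar))

theorem exists_le_val : ∃ m, ∀ v, m ≤ d.val v :=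
  let ⟨m, hm⟩ := (Set.finite_range d.val).bddBelow
  ⟨m, fun v => hm ⟨v, rfl⟩⟩

theorem isCompact_sub (t : ℝ) : IsCompact (sub d.gauge t) := by
  obtain ⟨m, hm⟩ := exists_le_val (d := d)
  have hK : IsCompact (Subtype.val ⁻¹' (Set.univ ×ˢ Set.Icc m t) : Set d.Carrier) :=
    isClosed_carrier.isClosedEmbedding_subtypeVal.isCompact_preimage
      (isCompact_univ.prod isCompact_Icc)
  have hsub : sub d.gauge t = Quot.mk d.glueRel '' (Subtype.val ⁻¹' (Set.univ ×ˢ Set.Icc m t)) := by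
    ext x
    induction x using Quot.ind with | _ a =>
    refine ⟨fun ha => ⟨a, ⟨trivial, (hm _).trans a.2.1, ha⟩, rfl⟩, ?_⟩
    rintro ⟨b, ⟨-, -, hb⟩, hba⟩
    rw [← hba]
    exact hb
  rw [hsub]
  exact hK.image continuous_quot_mk

variable (d) in
abbrev mergeMetric : MetricSpace d.Space where
  dist x y := 2 * d.mergeHeight x y - d.gauge x - d.gauge y
  dist_self x := by
    rw [mergeHeight_self]
    ring
  dist_comm x y := by
    rw [mergeHeight_comm]
    ring
  dist_triangle x y z := by
    have := mergeHeight_le_max x y z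
    have := gauge_le_mergeHeight y x
    have := gauge_le_mergeHeight y z
    rw [mergeHeight_comm y x] at *
    rcases max_cases (d.mergeHeight x y) (d.mergeHeight y z) with ⟨h, -⟩ | ⟨h, -⟩ <;>
      linarith
  eq_of_dist_eq_zero {x y} h := by
    have hx := gauge_le_mergeHeight x y
    have hy := gauge_le_mergeHeight y x
    rw [mergeHeight_comm] at hy
    exact eq_of_mergeHeight_le (by linarith) (by linarith)

variable (d) in
/-- A copy of `d.Space` carrying the topology of `mergeMetric`, to compare it with the quotient
topology. -/
def Metrized : Type := d.Space

instance : MetricSpace d.Metrized := d.mergeMetric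

variable (d) in
def toMetrized : d.Space ≃ d.Metrized := Equiv.refl _

theorem continuous_toMetrized : Continuous d.toMetrized := by
  refine Metric.continuous_iff'.2 fun x ε hε => ?_
  have hc : Continuous fun y => 2 * d.mergeHeight y x - d.gauge y - d.gauge x :=
    ((continuous_const.mul (continuous_mergeHeight_left x)).sub continuous_gauge).sub
      continuous_const
  refine hc.continuousAt.eventually_lt continuousAt_const ?_
  simp only [mergeHeight_self]
  linarith

theorem lipschitzWith_gauge_metrized : LipschitzWith 1 (d.gauge ∘ d.toMetrized.symm) := by
  refine LipschitzWith.of_dist_le_mul fun x y => ?_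
  change |d.gauge x - d.gauge y| ≤ 1 * (2 * d.mergeHeight x y - d.gauge x - d.gauge y)
  have hx := gauge_le_mergeHeight (d := d) x y
  have hy := (gauge_le_mergeHeight (d := d) y x).trans_eq (mergeHeight_comm y x)
  rw [abs_le]
  constructor <;> linarith

theorem isProperMap_toMetrized : IsProperMap d.toMetrized := by
  refine isProperMap_iff_isCompact_preimage.2 ⟨continuous_toMetrized, fun K hK => ?_⟩
  rcases K.eq_empty_or_nonempty with rfl | hne
  · exact isCompact_empty
  obtain ⟨z, -, hz⟩ := hK.exists_isMaxOn hne lipschitzWith_gauge_metrized.continuous.continuousOn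
  exact (isCompact_sub (d.gauge z)).of_isClosed_subset
    (hK.isClosed.preimage continuous_toMetrized) fun y hy => hz hy

theorem topology_eq_mergeMetric :
    (inferInstance : TopologicalSpace d.Space) = d.mergeMetric.toUniformSpace.toTopologicalSpace :=
  (d.toMetrized.toHomeomorphOfContinuousClosed continuous_toMetrized
    isProperMap_toMetrized.isClosedMap).induced_eq.symm.trans
    (@induced_id _ d.mergeMetric.toUniformSpace.toTopologicalSpace)

instance : MetricSpace d.Space := d.mergeMetric.replaceTopology topology_eq_mergeMetric

theorem dist_eq (x y : d.Space) : dist x y = 2 * d.mergeHeight x y - d.gauge x - d.gauge y := rfl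

theorem dist_pointAbove {v : Fin d.n} {h h' : ℝ} (hv : d.val v ≤ h) (hv' : d.val v ≤ h') :
    dist (pointAbove v h hv) (pointAbove v h' hv') = |h - h'| := by
  rw [dist_eq, mergeHeight_pointAbove, gauge_pointAbove, gauge_pointAbove]
  rcases le_total h h' with hle | hle
  · rw [max_eq_right hle, abs_of_nonpos (by linarith)]
    ring
  · rw [max_eq_left hle, abs_of_nonneg (by linarith)]
    ring

/-- The path from `a` towards the root, parametrized by height (constant below `a`). -/
def pathUp (a : d.Carrier) (h : ℝ) : d.Space :=
  pointAbove a.1.1 (max h a.1.2) (a.2.1.trans (le_max_right _ _))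

theorem continuous_pathUp (a : d.Carrier) : Continuous (pathUp a) :=
  LipschitzWith.continuous (K := 1) <| LipschitzWith.of_dist_le_mul fun h h' => by
    rw [pathUp, pathUp, dist_pointAbove, NNReal.coe_one, one_mul, Real.dist_eq]
    exact abs_max_sub_max_le_abs _ _ _

theorem exists_isPreconnected_sub_mergeHeight (x y : d.Space) :
    ∃ C : Set d.Space, IsPreconnected C ∧ x ∈ C ∧ y ∈ C ∧ C ⊆ sub d.gauge (d.mergeHeight x y) := by
  induction x using Quot.ind with | _ a =>
  induction y using Quot.ind with | _ b =>
  set m := mergeHeightRep a b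
  have hma : a.1.2 ≤ m := (le_max_left _ _).trans (le_max_left _ _)
  have hmb : b.1.2 ≤ m := (le_max_right _ _).trans (le_max_left _ _)
  have hbot : ∀ c : d.Carrier, pathUp c c.1.2 = Quot.mk _ c := fun c => by
    rw [pathUp]
    simp only [max_self]
    exact pointAbove_self c
  have hsub : ∀ c : d.Carrier, c.1.2 ≤ m → pathUp c '' Set.Icc c.1.2 m ⊆ sub d.gauge m := by
    rintro c - _ ⟨h, hh, rfl⟩
    exact max_le hh.2 (hh.1.trans hh.2)
  have hjoin : pathUp a m = pathUp b m := by
    simp only [pathUp, max_eq_left hma, max_eq_left hmb]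
    exact pointAbove_eq_of_val_lca_le _ _ (le_max_right _ _)
  refine ⟨pathUp a '' Set.Icc a.1.2 m ∪ pathUp b '' Set.Icc b.1.2 m, ?_,
    .inl ⟨_, ⟨le_rfl, hma⟩, hbot a⟩, .inr ⟨_, ⟨le_rfl, hmb⟩, hbot b⟩,
    Set.union_subset (hsub a hma) (hsub b hmb)⟩
  exact (isPreconnected_Icc.image _ (continuous_pathUp a).continuousOn).union (pathUp a m)
    ⟨m, ⟨hma, le_rfl⟩, rfl⟩ ⟨m, ⟨hmb, le_rfl⟩, hjoin.symm⟩
    (isPreconnected_Icc.image _ (continuous_pathUp b).continuousOn)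

theorem exists_eq_val_of_lt_mergeHeight {x y : d.Space} {t : ℝ} (hx : d.gauge x ≤ t)
    (hy : d.gauge y ≤ t) (ht : t < d.mergeHeight x y) : ∃ v, d.mergeHeight x y = d.val v := by
  induction x using Quot.ind with | _ a =>
  induction y using Quot.ind with | _ b =>
  refine ⟨d.lca a.1.1 b.1.1, max_eq_right ?_⟩
  by_contra! hlt
  rw [mergeHeight_mk, mergeHeightRep, max_eq_left hlt.le] at ht
  exact ht.not_ge (max_le hx hy)

/-- Within a sublevel set, merge heights above the level are node values, a finite set; so the
continuous function `mergeHeight x` cannot climb above the level on a preconnected set. -/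
theorem mergeHeight_le_of_isPreconnected {t : ℝ} {C : Set d.Space} (hC : IsPreconnected C)
    (hCt : C ⊆ sub d.gauge t) {x y : d.Space} (hx : x ∈ C) (hy : y ∈ C) :
    d.mergeHeight x y ≤ t := by
  by_contra! hlt
  obtain ⟨s, ⟨hts, hsm⟩, hs⟩ := ((Set.Ioo_infinite hlt).sdiff (Set.finite_range d.val)).nonempty
  have hxt : d.mergeHeight x x ≤ t := (mergeHeight_self x).trans_le (hCt hx)
  have hcont : Continuous (d.mergeHeight x) :=
    (continuous_mergeHeight_left x).congr fun z => mergeHeight_comm z x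
  obtain ⟨z, hz, hzs⟩ := hC.intermediate_value hx hy hcont.continuousOn ⟨hxt.trans hts.le, hsm.le⟩
  obtain ⟨v, hv⟩ := exists_eq_val_of_lt_mergeHeight (hCt hx) (hCt hz) (hzs ▸ hts)
  exact hs ⟨v, hv ▸ hzs⟩

theorem mem_connectedComponentIn_sub_iff {t : ℝ} {x y : d.Space} :
    y ∈ connectedComponentIn (sub d.gauge t) x ↔ d.mergeHeight x y ≤ t := by
  constructor
  · intro hy
    have hx := connectedComponentIn_nonempty_iff.1 ⟨y, hy⟩
    exact mergeHeight_le_of_isPreconnected isPreconnected_connectedComponentIn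
      (connectedComponentIn_subset _ _) (mem_connectedComponentIn hx) hy
  · intro hm
    obtain ⟨C, hC, hxC, hyC, hCsub⟩ := exists_isPreconnected_sub_mergeHeight x y
    refine hC.subset_connectedComponentIn hxC (fun z hz => ?_) hyC
    exact (hCsub hz).trans hm

theorem mergeHeight_map_le {d' : MergeTreeData} {ε : ℝ} {f : d.Space → d'.Space}
    (hf : Continuous f) (hfπ : ∀ x, d'.gauge (f x) = d.gauge x + ε) (x y : d.Space) :
    d'.mergeHeight (f x) (f y) ≤ d.mergeHeight x y + ε := by
  obtain ⟨C, hC, hxC, hyC, hCsub⟩ := exists_isPreconnected_sub_mergeHeight x y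
  refine mergeHeight_le_of_isPreconnected (hC.image f hf.continuousOn) ?_
    ⟨x, hxC, rfl⟩ ⟨y, hyC, rfl⟩
  rintro _ ⟨z, hz, rfl⟩
  exact (hfπ z).trans_le (add_le_add_left (hCsub hz) ε)

theorem lipschitzWith_of_gauge_add {d' : MergeTreeData} {ε : ℝ} {f : d.Space → d'.Space}
    (hf : Continuous f) (hfπ : ∀ x, d'.gauge (f x) = d.gauge x + ε) : LipschitzWith 1 f := by
  refine LipschitzWith.of_dist_le_mul fun x y => ?_
  rw [dist_eq, dist_eq, hfπ, hfπ, NNReal.coe_one, one_mul]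
  linarith [mergeHeight_map_le hf hfπ x y]

theorem dist_le_of_shiftMapProp {ε : ℝ} {σ : d.Space → d.Space} (hσ : ShiftMapProp d.gauge ε σ)
    (x : d.Space) : dist (σ x) x ≤ ε := by
  have hm := mem_connectedComponentIn_sub_iff.1 (hσ.2 x).2
  rw [dist_eq, mergeHeight_comm, (hσ.2 x).1]
  linarith

variable (d) in
def rayPoint (h : ℝ) : d.Space :=
  Quot.mk _ ⟨(d.root, max h (d.val d.root)), le_max_right _ _, fun hr => absurd rfl hr⟩

theorem continuous_rayPoint : Continuous d.rayPoint :=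
  continuous_quot_mk.comp <|
    (continuous_const.prodMk (continuous_id.max continuous_const)).subtype_mk _

theorem gauge_rayPoint {h : ℝ} (hh : d.val d.root ≤ h) : d.gauge (d.rayPoint h) = h :=
  max_eq_left hh

theorem mergeHeight_rayPoint (x : d.Space) {h : ℝ} (hh : d.val d.root ≤ h) :
    d.mergeHeight x (d.rayPoint h) = max (d.gauge x) h := by
  induction x using Quot.ind with | _ a =>
  change max (max a.1.2 (max h (d.val d.root))) (d.val (d.lca a.1.1 d.root)) = max a.1.2 h
  rw [lca_eq_right (desc_root _), max_eq_left hh]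
  exact max_eq_left ((le_max_right _ _).trans' hh)

theorem le_gauge {m : ℝ} (hm : ∀ v, m ≤ d.val v) (x : d.Space) : m ≤ d.gauge x := by
  induction x using Quot.ind with | _ a =>
  exact (hm a.1.1).trans a.2.1

theorem shiftMapProp_rayPoint {m ε : ℝ} (hm : ∀ v, m ≤ d.val v) (hε₀ : 0 ≤ ε)
    (hε : d.val d.root ≤ m + ε) : ShiftMapProp d.gauge ε (fun x => d.rayPoint (d.gauge x + ε)) := by
  refine ⟨continuous_rayPoint.comp (continuous_gauge.add continuous_const), fun x => ?_⟩
  have hroot : d.val d.root ≤ d.gauge x + ε := by linarith [le_gauge hm x]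
  refine ⟨gauge_rayPoint hroot, mem_connectedComponentIn_sub_iff.2 ?_⟩
  rw [mergeHeight_rayPoint x hroot]
  exact max_le (by linarith) le_rfl

theorem exists_interleaved (d₁ d₂ : MergeTreeData) :
    ∃ ε, 0 ≤ ε ∧ Interleaved d₁.gauge d₂.gauge ε := by
  obtain ⟨m₁, hm₁⟩ := exists_le_val (d := d₁)
  obtain ⟨m₂, hm₂⟩ := exists_le_val (d := d₂)
  set ε := max (d₂.val d₂.root - m₁) (d₁.val d₁.root - m₂)
  have h₁ : d₂.val d₂.root - m₁ ≤ ε := le_max_left _ _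
  have h₂ : d₁.val d₁.root - m₂ ≤ ε := le_max_right _ _
  have hε₀ : 0 ≤ ε := by linarith [hm₁ d₁.root, hm₂ d₂.root]
  have hα : ∀ x, d₂.val d₂.root ≤ d₁.gauge x + ε := fun x => by linarith [le_gauge hm₁ x]
  have hβ : ∀ y, d₁.val d₁.root ≤ d₂.gauge y + ε := fun y => by linarith [le_gauge hm₂ y]
  refine ⟨ε, hε₀, fun x => d₂.rayPoint (d₁.gauge x + ε), fun y => d₁.rayPoint (d₂.gauge y + ε),
    fun x => d₁.rayPoint (d₁.gauge x + 2 * ε), fun y => d₂.rayPoint (d₂.gauge y + 2 * ε),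
    continuous_rayPoint.comp (continuous_gauge.add continuous_const),
    continuous_rayPoint.comp (continuous_gauge.add continuous_const),
    shiftMapProp_rayPoint hm₁ (by positivity) (by linarith [hm₂ d₂.root]),
    shiftMapProp_rayPoint hm₂ (by positivity) (by linarith [hm₁ d₁.root]),
    fun x => gauge_rayPoint (hα x), fun y => gauge_rayPoint (hβ y), ?_, ?_⟩
  · funext x
    simp only [Function.comp_apply, gauge_rayPoint (hα x)]
    ring_nf
  · funext y
    simp only [Function.comp_apply, gauge_rayPoint (hβ y)]
    ring_nf

theorem gaugedIso_of_tendsto_interleaved {d' : MergeTreeData} {ε : ℕ → ℝ}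
    (hε : Tendsto ε atTop (𝓝 0)) (h : ∀ n, Interleaved d.gauge d'.gauge (ε n)) :
    GaugedIso d.gauge d'.gauge := by
  choose α β σ σ' hα hβ hσ hσ' hαπ hβπ hβα hαβ using h
  refine gaugedIso_of_tendsto continuous_gauge isCompact_sub isCompact_sub hε
    (fun n => lipschitzWith_of_gauge_add (hα n) (hαπ n))
    (fun n => lipschitzWith_of_gauge_add (hβ n) (hβπ n)) hαπ hβπ (fun n x => ?_) (fun n y => ?_)
  · rw [← Function.comp_apply (f := β n), hβα]
    exact dist_le_of_shiftMapProp (hσ n) x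
  · rw [← Function.comp_apply (f := α n), hαβ]
    exact dist_le_of_shiftMapProp (hσ' n) y

end MergeTreeData

section CellularMergeTree

variable {X Y : Type*} [TopologicalSpace X] [TopologicalSpace Y] {πX : X → ℝ} {πY : Y → ℝ}

theorem IsCellularMergeTree.nonempty_setOf_interleaved (hX : IsCellularMergeTree πX)
    (hY : IsCellularMergeTree πY) : {ε : ℝ | 0 ≤ ε ∧ Interleaved πX πY ε}.Nonempty := by
  obtain ⟨d, e⟩ := hX
  obtain ⟨d', e'⟩ := hY
  obtain ⟨ε, hε, h⟩ := MergeTreeData.exists_interleaved d d'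
  exact ⟨ε, hε, h.congr e e'⟩

theorem IsCellularMergeTree.gaugedIso_of_dI_eq_zero (hX : IsCellularMergeTree πX)
    (hY : IsCellularMergeTree πY) (h : dI πX πY = 0) : GaugedIso πX πY := by
  obtain ⟨ε, hε, hI⟩ :=
    exists_seq_interleaved_of_dI_eq_zero (hX.nonempty_setOf_interleaved hY) h
  obtain ⟨d, e⟩ := hX
  obtain ⟨d', e'⟩ := hY
  exact e.symm.trans <| (MergeTreeData.gaugedIso_of_tendsto_interleaved hε fun n =>
    (hI n).congr e.symm e'.symm).trans e'

end CellularMergeTree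

/-- The interleaving distance is a genuine metric on cellular merge trees up to isomorphism:
it is real-valued (some interleaving exists), symmetric, satisfies the triangle inequality,
and two cellular merge trees at distance zero are isomorphic as gauged spaces. -/
theorem stmt11 {A B C : Type} [TopologicalSpace A] [TopologicalSpace B] [TopologicalSpace C]
    (πA : A → ℝ) (πB : B → ℝ) (πC : C → ℝ)
    (hA : IsCellularMergeTree πA) (hB : IsCellularMergeTree πB)
    (hC : IsCellularMergeTree πC) :
    {ε : ℝ | 0 ≤ ε ∧ Interleaved πA πB ε}.Nonempty ∧
    dI πA πB = dI πB πA ∧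
    dI πA πC ≤ dI πA πB + dI πB πC ∧
    (dI πA πB = 0 → GaugedIso πA πB) := by
  have hAB := hA.nonempty_setOf_interleaved hB
  exact ⟨hAB, dI_comm πA πB, dI_le_add hAB (hB.nonempty_setOf_interleaved hC),
    hA.gaugedIso_of_dI_eq_zero hB⟩
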